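/- arXiv:2208.04502 — 5 statements merged into one kernel-verified Lean document; each statement's English description precedes it below -/
import Mathlib

section
/- Let z1, z2 be points in the open unit disk D with |z1| ≤ |z2|. Then (1/2)·d(z1,z2) ≤ |z2 − z1|/(1 − |z2|), where d is the hyperbolic distance in the Poincaré disk. -/
open Real Complex

/-- Hyperbolic (Poincaré) distance on the unit disk, via
`sinh (d z w / 2) = |z - w| / sqrt ((1 - |z|^2) * (1 - |w|^2))`. -/
noncomputable def hypDist (z w : ℂ) : ℝ :=
  2 * Real.arsinh (‖z - w‖ /
    Real.sqrt ((1 - ‖z‖ ^ 2) * (1 - ‖w‖ ^ 2)))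

theorem Real.arsinh_le_self {x : ℝ} (hx : 0 ≤ x) : arsinh x ≤ x := by
  rw [← sinh_le_sinh, sinh_arsinh]
  exact self_le_sinh_iff.mpr hx

theorem one_sub_le_sqrt_mul_one_sub_sq {s r : ℝ} (hs : 0 ≤ s) (hsr : s ≤ r) (hr : r ≤ 1) :
    1 - r ≤ √((1 - s ^ 2) * (1 - r ^ 2)) := by
  have hr_sq : 1 - r ≤ 1 - r ^ 2 := by nlinarith
  have hs_sq : 1 - r ^ 2 ≤ 1 - s ^ 2 := by nlinarith
  apply Real.le_sqrt_of_sq_le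
  calc (1 - r) ^ 2 ≤ (1 - r ^ 2) * (1 - r ^ 2) := by
        rw [sq]; exact mul_le_mul hr_sq hr_sq (by linarith) (by linarith)
    _ ≤ (1 - s ^ 2) * (1 - r ^ 2) := by gcongr; linarith

theorem half_hypDist_le_ratio_general (z1 z2 : ℂ)
    (h2 : ‖z2‖ < 1)
    (hle : ‖z1‖ ≤ ‖z2‖) :
    (1 / 2) * hypDist z1 z2 ≤ ‖z2 - z1‖ / (1 - ‖z2‖) := by
  set ρ := ‖z2 - z1‖ / √((1 - ‖z1‖ ^ 2) * (1 - ‖z2‖ ^ 2))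
  calc (1 / 2) * hypDist z1 z2 = arsinh ρ := by rw [hypDist, norm_sub_rev]; ring
    _ ≤ ρ := arsinh_le_self (by positivity)
    _ ≤ ‖z2 - z1‖ / (1 - ‖z2‖) :=
      div_le_div_of_nonneg_left (norm_nonneg _) (by linarith)
        (one_sub_le_sqrt_mul_one_sub_sq (norm_nonneg z1) hle h2.le)

theorem half_hypDist_le_ratio (z1 z2 : ℂ)
    (h1 : ‖z1‖ < 1) (h2 : ‖z2‖ < 1)
    (hle : ‖z1‖ ≤ ‖z2‖) :
    (1 / 2) * hypDist z1 z2 ≤ ‖z2 - z1‖ / (1 - ‖z2‖) :=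
  half_hypDist_le_ratio_general z1 z2 h2 hle
end

section
/- Suppose z1, z2 are distinct points in the Poincaré disk D with hyperbolic distance d(z1,z2) ≤ 1. Let γ be the hyperbolic geodesic arc from z1 to z2 and γ' the Euclidean segment from z1 to z2. Then the angle between γ and γ' at z1 is less than 2·d(z1,z2). -/
open Real Complex

/-!
The chord `|z₂ - z₁|` of the geodesic circle (center `c`, radius `r`) gives
`sin θ = |z₂ - z₁| / 2r`. Orthogonality `|c|² = 1 + r²` and the triangle inequality
`|c| ≤ |z| + r` give `1 - |z|² ≤ 2r` for every `z` on the circle inside the disk, so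
`sin θ ≤ |z₂ - z₁| / √((1 - |z₁|²)(1 - |z₂|²)) = sinh (d / 2)`.
With `arcsin s ≤ (π / 2) s` and `sinh x ≤ (3 / 2) x` on `[0, 1]` this yields
`θ ≤ (3π / 8) d < 2d`.
-/

theorem Real.sinh_le_three_halves_mul {x : ℝ} (hx₀ : 0 ≤ x) (hx₁ : x ≤ 1) :
    sinh x ≤ 3 / 2 * x := by
  have hexp : exp x - 1 - x ≤ x ^ 2 :=
    (abs_le.mp (abs_exp_sub_one_sub_id_le (by rwa [abs_of_nonneg hx₀]))).2
  have hexp_neg : 1 - x ≤ exp (-x) := by linarith [add_one_le_exp (-x)]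
  rw [sinh_eq]
  nlinarith

theorem Real.arcsin_le_pi_div_two_mul {x : ℝ} (hx : 0 ≤ x) : arcsin x ≤ π / 2 * x := by
  rcases le_or_gt x 1 with hx₁ | hx₁
  · have hsin := mul_le_sin (arcsin_nonneg.mpr hx) (arcsin_le_pi_div_two x)
    rw [sin_arcsin (by linarith) hx₁] at hsin
    have := pi_pos
    calc arcsin x = π / 2 * (2 / π * arcsin x) := by field_simp
      _ ≤ π / 2 * x := by gcongr
  · rw [arcsin_of_one_le hx₁.le]
    nlinarith [pi_pos]

theorem one_sub_norm_sq_le_two_mul_norm_sub {E : Type*} [SeminormedAddCommGroup E] {z c : E}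
    (hz : ‖z‖ ≤ 1) (horth : ‖c‖ ^ 2 = 1 + ‖z - c‖ ^ 2) :
    1 - ‖z‖ ^ 2 ≤ 2 * ‖z - c‖ := by
  have htri := norm_le_norm_add_norm_sub z c
  nlinarith [norm_nonneg z, norm_nonneg c, norm_nonneg (z - c)]

theorem hypDist_pos {z w : ℂ} (hz : ‖z‖ < 1) (hw : ‖w‖ < 1) (hne : z ≠ w) :
    0 < hypDist z w := by
  have hz' : 0 < 1 - ‖z‖ ^ 2 := by nlinarith [norm_nonneg z]
  have hw' : 0 < 1 - ‖w‖ ^ 2 := by nlinarith [norm_nonneg w]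
  have : 0 < ‖z - w‖ := norm_pos_iff.mpr (sub_ne_zero.mpr hne)
  unfold hypDist
  have := arsinh_pos_iff.mpr (by positivity :
    0 < ‖z - w‖ / Real.sqrt ((1 - ‖z‖ ^ 2) * (1 - ‖w‖ ^ 2)))
  linarith

theorem chord_div_diameter_le_sinh_half_hypDist {z₁ z₂ c : ℂ} (h₁ : ‖z₁‖ < 1) (h₂ : ‖z₂‖ < 1)
    (hon : ‖z₁ - c‖ = ‖z₂ - c‖) (horth : ‖c‖ ^ 2 = 1 + ‖z₁ - c‖ ^ 2) :
    ‖z₂ - z₁‖ / (2 * ‖c - z₁‖) ≤ Real.sinh (hypDist z₁ z₂ / 2) := by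
  set r := ‖z₁ - c‖
  have k₁ : 1 - ‖z₁‖ ^ 2 ≤ 2 * r := one_sub_norm_sq_le_two_mul_norm_sub h₁.le horth
  have k₂ : 1 - ‖z₂‖ ^ 2 ≤ 2 * r :=
    hon ▸ one_sub_norm_sq_le_two_mul_norm_sub h₂.le (hon ▸ horth)
  have p₁ : 0 < 1 - ‖z₁‖ ^ 2 := by nlinarith [norm_nonneg z₁]
  have p₂ : 0 < 1 - ‖z₂‖ ^ 2 := by nlinarith [norm_nonneg z₂]
  have hB : Real.sqrt ((1 - ‖z₁‖ ^ 2) * (1 - ‖z₂‖ ^ 2)) ≤ 2 * r :=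
    (sqrt_le_left (by linarith)).mpr (by nlinarith)
  unfold hypDist
  rw [mul_div_cancel_left₀ _ two_ne_zero, sinh_arsinh, norm_sub_rev z₂,
    norm_sub_rev c]
  exact div_le_div_of_nonneg_left (norm_nonneg _) (by positivity) hB

/-- If the hyperbolic geodesic from z1 to z2 lies on a Euclidean circle centered at zs
(orthogonal to the unit circle), then the angle between the geodesic and the Euclidean
segment at z1, which equals arcsin(|z2 - z1| / (2 |zs - z1|)), is less than
2 * hypDist z1 z2. -/
theorem angle_geodesic_segment_lt (z1 z2 zs : ℂ)
    (h1 : ‖z1‖ < 1) (h2 : ‖z2‖ < 1) (hne : z1 ≠ z2)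
    (hd : hypDist z1 z2 ≤ 1)
    (hon1 : ‖z1 - zs‖ = ‖z2 - zs‖)
    (horth : ‖zs‖ ^ 2 = 1 + ‖z1 - zs‖ ^ 2) :
    Real.arcsin (‖z2 - z1‖ / (2 * ‖zs - z1‖))
      < 2 * hypDist z1 z2 := by
  set d := hypDist z1 z2
  have hd₀ : 0 < d := hypDist_pos h1 h2 hne
  have hpi : π < 16 / 3 := by linarith [pi_lt_d2]
  calc arcsin (‖z2 - z1‖ / (2 * ‖zs - z1‖))
      ≤ π / 2 * (‖z2 - z1‖ / (2 * ‖zs - z1‖)) := arcsin_le_pi_div_two_mul (by positivity)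
    _ ≤ π / 2 * Real.sinh (d / 2) := by
      gcongr; exact chord_div_diameter_le_sinh_half_hypDist h1 h2 hon1 horth
    _ ≤ π / 2 * (3 / 2 * (d / 2)) := by
      gcongr; exact sinh_le_three_halves_mul (by linarith) (by linarith)
    _ < 2 * d := by nlinarith
end

section
/- Let b ∈ ℝ and let z, w be points in D such that e^b·z and e^b·w are also in D. Set u_z = b + log((1−|z|²)/(1−|e^b z|²)) and u_w = b + log((1−|w|²)/(1−|e^b w|²)). Then sinh(d(e^b z, e^b w)/2) = e^{(u_z+u_w)/2} sinh(d(z,w)/2). -/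
open Real Complex

/-! Both sides are explicit: `sinh (d/2)` is `|z - w| / √((1 - |z|²)(1 - |w|²))`, scaling multiplies
`|z - w|` by `e^b`, and `e^{(u_z + u_w)/2} = e^b √((1 - |z|²)(1 - |w|²)) / √((1 - |e^b z|²)(1 - |e^b w|²))`,
so the identity reduces to cancelling square roots. -/

theorem sinh_hypDist_div_two (z w : ℂ) :
    Real.sinh (hypDist z w / 2) = ‖z - w‖ / √((1 - ‖z‖ ^ 2) * (1 - ‖w‖ ^ 2)) := by
  rw [hypDist, mul_div_cancel_left₀ _ two_ne_zero, Real.sinh_arsinh]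

theorem one_sub_norm_sq_pos {E : Type*} [SeminormedAddGroup E] {x : E} (hx : ‖x‖ < 1) :
    0 < 1 - ‖x‖ ^ 2 := by
  have : ‖x‖ ^ 2 < 1 := pow_lt_one₀ (norm_nonneg x) hx two_ne_zero
  linarith

theorem Real.exp_log_div_two {x : ℝ} (hx : 0 < x) : Real.exp (Real.log x / 2) = √x := by
  rw [← Real.log_sqrt hx.le, Real.exp_log (Real.sqrt_pos.mpr hx)]

theorem exp_half_add_log_div {a a' c c' : ℝ} (ha : 0 < a) (ha' : 0 < a') (hc : 0 < c)
    (hc' : 0 < c') (b : ℝ) :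
    Real.exp (((b + Real.log (a / a')) + (b + Real.log (c / c'))) / 2)
      = Real.exp b * (√(a * c) / √(a' * c')) := by
  have hlog : Real.log (a / a') + Real.log (c / c') = Real.log (a * c / (a' * c')) := by
    rw [← Real.log_mul (by positivity) (by positivity), div_mul_div_comm]
  rw [show ((b + Real.log (a / a')) + (b + Real.log (c / c'))) / 2
      = b + (Real.log (a / a') + Real.log (c / c')) / 2 by ring,
    Real.exp_add, hlog, Real.exp_log_div_two (by positivity), Real.sqrt_div' _ (by positivity)]

theorem scaling_discrete_conformal (b : ℝ) (z w : ℂ)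
    (hz : ‖z‖ < 1) (hw : ‖w‖ < 1)
    (hz' : ‖Real.exp b • z‖ < 1)
    (hw' : ‖Real.exp b • w‖ < 1) :
    Real.sinh (hypDist (Real.exp b • z) (Real.exp b • w) / 2)
      = Real.exp (((b + Real.log ((1 - ‖z‖ ^ 2) /
              (1 - ‖Real.exp b • z‖ ^ 2)))
          + (b + Real.log ((1 - ‖w‖ ^ 2) /
              (1 - ‖Real.exp b • w‖ ^ 2)))) / 2)
        * Real.sinh (hypDist z w / 2) := by
  have hpq : 0 < √((1 - ‖z‖ ^ 2) * (1 - ‖w‖ ^ 2)) :=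
    Real.sqrt_pos.mpr (mul_pos (one_sub_norm_sq_pos hz) (one_sub_norm_sq_pos hw))
  rw [exp_half_add_log_div (one_sub_norm_sq_pos hz) (one_sub_norm_sq_pos hz')
      (one_sub_norm_sq_pos hw) (one_sub_norm_sq_pos hw'),
    sinh_hypDist_div_two, sinh_hypDist_div_two, ← smul_sub,
    norm_smul_of_nonneg (Real.exp_pos b).le]
  field_simp
end

section
/- Let ε ∈ (0,1] and let z_i'', z_j'', z_k'' ∈ D form a Euclidean triangle with all inner angles at least ε/2. If the hyperbolic distance d(z_i'', z_j'') ≤ ε/16 and |z_i''| ≤ |z_j''| (so Lemma bounds apply), then d(z_j'', z_k'') ≤ (32/ε)·d(z_i'', z_j'') ≤ 2. -/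
open Real Complex

open EuclideanGeometry

/-!
For nearby points the hyperbolic distance is comparable to the Euclidean distance divided by the
distance to the boundary circle: `|zi - zj| / (1 - |zj|) ≤ 2 d(zi, zj)` once `d(zi, zj) ≤ 1`, and
`d(z, w) ≤ 2 |z - w| / (1 - ρ)` when both points lie in the disk of radius `ρ`. By the law of sines
and Jordan's inequality the angle bounds give `|zj - zk| ≤ (4 / ε) |zi - zj|`, which is at most
`(1 - |zj|) / 2` because `d(zi, zj) ≤ ε / 16`; so `zk` stays in the disk of radius
`(1 + |zj|) / 2`, and chaining the three estimates gives `d(zj, zk) ≤ (32 / ε) d(zi, zj)`.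
-/

theorem Real.two_div_pi_mul_le_sin {a θ : ℝ} (ha : 0 ≤ a) (h₁ : a ≤ θ) (h₂ : a ≤ π - θ) :
    2 / π * a ≤ sin θ := by
  rcases le_total θ (π / 2) with hθ | hθ
  · calc 2 / π * a ≤ 2 / π * θ := by gcongr
      _ ≤ sin θ := mul_le_sin (ha.trans h₁) hθ
  · calc 2 / π * a ≤ 2 / π * (π - θ) := by gcongr
      _ ≤ sin (π - θ) := mul_le_sin (ha.trans h₂) (by linarith)
      _ = sin θ := sin_pi_sub θ

namespace EuclideanGeometry

variable {V P : Type*} [NormedAddCommGroup V] [InnerProductSpace ℝ V] [MetricSpace P]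
  [NormedAddTorsor V P]

theorem angle_add_angle_le_pi (p₁ p₂ p₃ : P) : ∠ p₁ p₂ p₃ + ∠ p₃ p₁ p₂ ≤ π := by
  rcases eq_or_ne p₂ p₁ with rfl | h
  · simp
  · linarith [angle_add_angle_add_angle_eq_pi p₃ h, angle_nonneg p₂ p₃ p₁]

theorem two_div_pi_mul_mul_dist_le_dist {p₁ p₂ p₃ : P} {a : ℝ} (ha : 0 ≤ a)
    (h₂ : a ≤ ∠ p₁ p₂ p₃) (h₁ : a ≤ ∠ p₃ p₁ p₂) : 2 / π * a * dist p₂ p₃ ≤ dist p₃ p₁ := by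
  have hsin : 2 / π * a ≤ Real.sin (∠ p₁ p₂ p₃) :=
    Real.two_div_pi_mul_le_sin ha h₂ (by linarith [angle_add_angle_le_pi p₁ p₂ p₃])
  calc 2 / π * a * dist p₂ p₃ ≤ Real.sin (∠ p₁ p₂ p₃) * dist p₂ p₃ := by gcongr
    _ = Real.sin (∠ p₃ p₁ p₂) * dist p₃ p₁ := law_sin p₁ p₂ p₃
    _ ≤ dist p₃ p₁ := mul_le_of_le_one_left dist_nonneg (Real.sin_le_one _)

end EuclideanGeometry

theorem Real.le_exp_two_mul_arsinh_sub_one {x s : ℝ} (hx : 0 ≤ x) (hs : 0 ≤ s)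
    (h : x ^ 2 ≤ 4 * s ^ 2 * (1 + x)) : x ≤ exp (2 * arsinh s) - 1 := by
  have hr : √(1 + s ^ 2) ^ 2 = 1 + s ^ 2 := sq_sqrt (by positivity)
  have hr0 : 0 ≤ √(1 + s ^ 2) := sqrt_nonneg _
  rw [two_mul, exp_add, exp_arsinh]
  -- `exp (2 * arsinh s) - 1 = 2 s² + 2 s √(1 + s²)` is the positive root of `X² - 4 s² X - 4 s²`
  nlinarith [mul_nonneg hs hr0, mul_nonneg hx (mul_nonneg hs hr0)]

section HypDist

variable {z w : ℂ}

theorem hypDist_nonneg (z w : ℂ) : 0 ≤ hypDist z w := by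
  unfold hypDist
  have := Real.arsinh_nonneg_iff.2 (by positivity : 0 ≤ ‖z - w‖ / √((1 - ‖z‖ ^ 2) * (1 - ‖w‖ ^ 2)))
  linarith

theorem hypDist_le_of_norm_le {ρ : ℝ} (hz : ‖z‖ ≤ ρ) (hw : ‖w‖ ≤ ρ) (hρ : ρ < 1) :
    hypDist z w ≤ 2 * ‖z - w‖ / (1 - ρ) := by
  have hρ0 : 0 < 1 - ρ := by linarith
  have hfactor {r : ℝ} (hr0 : 0 ≤ r) (hr : r ≤ ρ) : 1 - ρ ≤ 1 - r ^ 2 := by nlinarith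
  have hsqrt : 1 - ρ ≤ √((1 - ‖z‖ ^ 2) * (1 - ‖w‖ ^ 2)) := by
    apply Real.le_sqrt_of_sq_le
    rw [sq]
    exact mul_le_mul (hfactor (norm_nonneg z) hz) (hfactor (norm_nonneg w) hw) hρ0.le
      (hρ0.le.trans (hfactor (norm_nonneg z) hz))
  have harsinh {x : ℝ} (hx : 0 ≤ x) : Real.arsinh x ≤ x := by
    simpa only [Real.sinh_arsinh] using Real.self_le_sinh_iff.2 (Real.arsinh_nonneg_iff.2 hx)
  calc hypDist z w ≤ 2 * (‖z - w‖ / √((1 - ‖z‖ ^ 2) * (1 - ‖w‖ ^ 2))) := by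
        unfold hypDist; gcongr; exact harsinh (by positivity)
    _ ≤ 2 * (‖z - w‖ / (1 - ρ)) := by gcongr
    _ = 2 * ‖z - w‖ / (1 - ρ) := (mul_div_assoc ..).symm

theorem norm_sub_div_le_exp_hypDist_sub_one (hz : ‖z‖ < 1) (hw : ‖w‖ < 1) :
    ‖z - w‖ / (1 - ‖w‖) ≤ Real.exp (hypDist z w) - 1 := by
  have hz0 := norm_nonneg z
  have hw0 := norm_nonneg w
  have htri : ‖w‖ - ‖z‖ ≤ ‖z - w‖ := norm_sub_rev z w ▸ norm_sub_norm_le w z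
  have hA : 0 < 1 - ‖z‖ ^ 2 := by nlinarith
  have hB : 0 < 1 - ‖w‖ ^ 2 := by nlinarith
  have hq : 0 < 1 - ‖w‖ := by linarith
  have hAB : (1 - ‖z‖ ^ 2) * (1 - ‖w‖ ^ 2) ≤ 4 * (1 - ‖w‖) * (1 - ‖w‖ + ‖z - w‖) := by
    calc (1 - ‖z‖ ^ 2) * (1 - ‖w‖ ^ 2)
          = ((1 + ‖z‖) * (1 + ‖w‖)) * ((1 - ‖z‖) * (1 - ‖w‖)) := by ring
      _ ≤ 4 * ((1 - ‖w‖ + ‖z - w‖) * (1 - ‖w‖)) := by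
        gcongr
        · nlinarith
        · linarith
      _ = 4 * (1 - ‖w‖) * (1 - ‖w‖ + ‖z - w‖) := by ring
  refine Real.le_exp_two_mul_arsinh_sub_one (div_nonneg (norm_nonneg _) hq.le) (by positivity) ?_
  rw [div_pow, div_pow, Real.sq_sqrt (mul_pos hA hB).le]
  field_simp
  nlinarith [sq_nonneg ‖z - w‖]

theorem norm_sub_div_le_two_mul_hypDist (hz : ‖z‖ < 1) (hw : ‖w‖ < 1) (hd : hypDist z w ≤ 1) :
    ‖z - w‖ / (1 - ‖w‖) ≤ 2 * hypDist z w := by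
  have hd0 := hypDist_nonneg z w
  have hexp := abs_le.1 (Real.abs_exp_sub_one_sub_id_le (abs_le.2 ⟨by linarith, hd⟩))
  calc ‖z - w‖ / (1 - ‖w‖) ≤ Real.exp (hypDist z w) - 1 :=
        norm_sub_div_le_exp_hypDist_sub_one hz hw
    _ ≤ 2 * hypDist z w := by nlinarith

end HypDist

theorem hyperbolic_side_bound_general (ε : ℝ) (hε : ε ∈ Set.Ioc (0:ℝ) 1)
    (zi zj zk : ℂ)
    (hi : ‖zi‖ < 1) (hj : ‖zj‖ < 1)
    (hAi : ε / 2 ≤ EuclideanGeometry.angle zj zi zk)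
    (hAk : ε / 2 ≤ EuclideanGeometry.angle zi zk zj)
    (hd : hypDist zi zj ≤ ε / 16) :
    hypDist zj zk ≤ (32 / ε) * hypDist zi zj ∧ (32 / ε) * hypDist zi zj ≤ 2 := by
  obtain ⟨hε0, hε1⟩ := hε
  have hβ : 0 < 1 - ‖zj‖ := by linarith
  have hij : ‖zi - zj‖ ≤ 2 * hypDist zi zj * (1 - ‖zj‖) :=
    (div_le_iff₀ hβ).1 (norm_sub_div_le_two_mul_hypDist hi hj (by linarith))
  have hsine : ε / 4 * ‖zj - zk‖ ≤ ‖zi - zj‖ := by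
    have h := two_div_pi_mul_mul_dist_le_dist (by positivity) hAk hAi
    rw [Complex.dist_eq, Complex.dist_eq, norm_sub_rev zk zj, norm_sub_rev zj zi] at h
    refine le_trans ?_ h
    gcongr
    calc ε / 4 ≤ ε / π := div_le_div_of_nonneg_left hε0.le pi_pos pi_le_four
      _ = 2 / π * (ε / 2) := by ring
  have hzjzk : ‖zj - zk‖ ≤ 8 / ε * hypDist zi zj * (1 - ‖zj‖) := by
    rw [mul_assoc, div_mul_eq_mul_div, le_div_iff₀ hε0]
    linarith
  have hsmall : 8 / ε * hypDist zi zj ≤ 1 / 2 := by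
    calc 8 / ε * hypDist zi zj ≤ 8 / ε * (ε / 16) := by gcongr
      _ = 1 / 2 := by field_simp; norm_num
  have hzk : ‖zk‖ ≤ (1 + ‖zj‖) / 2 := by
    nlinarith [norm_sub_norm_le zk zj, norm_sub_rev zk zj]
  refine ⟨?_, ?_⟩
  · calc hypDist zj zk ≤ 2 * ‖zj - zk‖ / (1 - (1 + ‖zj‖) / 2) :=
          hypDist_le_of_norm_le (by linarith) hzk (by linarith)
      _ ≤ 2 * (8 / ε * hypDist zi zj * (1 - ‖zj‖)) / ((1 - ‖zj‖) / 2) := by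
          rw [show 1 - (1 + ‖zj‖) / 2 = (1 - ‖zj‖) / 2 by ring]
          gcongr
      _ = 32 / ε * hypDist zi zj := by field_simp; ring
  · calc 32 / ε * hypDist zi zj ≤ 32 / ε * (ε / 16) := by gcongr
      _ = 2 := by field_simp; norm_num

theorem hyperbolic_side_bound (ε : ℝ) (hε : ε ∈ Set.Ioc (0:ℝ) 1)
    (zi zj zk : ℂ)
    (hi : ‖zi‖ < 1) (hj : ‖zj‖ < 1) (hk : ‖zk‖ < 1)
    (hAi : ε / 2 ≤ EuclideanGeometry.angle zj zi zk)
    (hAj : ε / 2 ≤ EuclideanGeometry.angle zi zj zk)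
    (hAk : ε / 2 ≤ EuclideanGeometry.angle zi zk zj)
    (hd : hypDist zi zj ≤ ε / 16)
    (hle : ‖zi‖ ≤ ‖zj‖) :
    hypDist zj zk ≤ (32 / ε) * hypDist zi zj ∧ (32 / ε) * hypDist zi zj ≤ 2 :=
  hyperbolic_side_bound_general ε hε zi zj zk hi hj hAi hAk hd
end

section
/- Let ε ∈ (0,1]. Suppose positive reals l_ij, l_jk, l_ik, l'_ij, l'_jk, l'_ik satisfy: l_ij ≤ ε³/8192, l_ik ≤ ε³/8192 ≤ 1, l_jk ≥ l_ik·sin ε (hyperbolic triangle with angles ≥ ε gives sinh l_jk ≥ sinh l_ik · sin ε), l'_ik ≥ ε/16, l'_ik ≤ 2, l'_jk ≤ (32/ε) l'_ij, and l'_jk ≤ 2. Then (sinh(l'_ij/2)/sinh(l_ij/2)) · (sinh(l'_ik/2)/sinh(l_ik/2)) / (sinh(l'_jk/2)/sinh(l_jk/2)) ≥ ε³/(8192·l_ij) ≥ 1. -/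
/-!
On `[0, 1]` one has `x ≤ sinh x ≤ 2x`, so every `sinh (l / 2)` in the ratio is comparable to `l`:
the numerator factors are bounded below by `l / 2`, the denominator factors above by `l`. The
angle bound `sin ε ≥ ε / 2` turns `l_jk ≥ l_ik sin ε` into `sinh (l_jk / 2) ≥ ε l_ik / 4`, and
`l'_jk ≤ (32 / ε) l'_ij` lets `l'_ij` cancel, as does `l_ik`. What remains is
`(1/2) (ε/32) (ε/4) / (32/ε) / l_ij = ε³ / (8192 l_ij)`.
-/

open Real

theorem Real.sinh_le_two_mul {x : ℝ} (hx₀ : 0 ≤ x) (hx₁ : x ≤ 1) : sinh x ≤ 2 * x := by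
  have hexp : exp x - 1 ≤ 2 * x := by
    have h := abs_exp_sub_one_le (x := x) (by rwa [abs_of_nonneg hx₀])
    rw [abs_of_nonneg hx₀] at h
    exact (le_abs_self _).trans h
  have hexp_neg : 1 - exp (-x) ≤ x := by linarith [add_one_le_exp (-x)]
  rw [sinh_eq]
  linarith

theorem Real.sinh_half_le_self {x : ℝ} (hx₀ : 0 ≤ x) (hx₂ : x ≤ 2) : sinh (x / 2) ≤ x := by
  linarith [sinh_le_two_mul (x := x / 2) (by linarith) (by linarith)]

theorem Real.half_le_sinh_half {x : ℝ} (hx : 0 ≤ x) : x / 2 ≤ sinh (x / 2) :=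
  self_le_sinh_iff.mpr (by linarith)

theorem Real.half_le_sin {x : ℝ} (hx₀ : 0 ≤ x) (hx : x ≤ π / 2) : x / 2 ≤ sin x := by
  have hπ : 1 / 2 ≤ 2 / π := by rw [div_le_div_iff₀ two_pos pi_pos]; linarith [pi_le_four]
  calc x / 2 = 1 / 2 * x := by ring
    _ ≤ 2 / π * x := by gcongr
    _ ≤ sin x := mul_le_sin hx₀ hx

theorem contradiction_estimate_general (ε : ℝ) (hε : ε ∈ Set.Ioc (0:ℝ) 1)
    (lij ljk lik lij' ljk' lik' : ℝ)
    (hij : 0 < lij) (hjk : 0 < ljk) (hik : 0 < lik)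
    (hij' : 0 < lij') (hjk' : 0 < ljk') (hik' : 0 < lik')
    (h1 : lij ≤ ε ^ 3 / 8192) (h2 : lik ≤ ε ^ 3 / 8192) (h3 : ε ^ 3 / 8192 ≤ 1)
    (h4 : ljk ≥ lik * Real.sin ε)
    (h5 : lik' ≥ ε / 16)
    (h7 : ljk' ≤ (32 / ε) * lij') (h8 : ljk' ≤ 2) :
    (Real.sinh (lij' / 2) / Real.sinh (lij / 2))
      * (Real.sinh (lik' / 2) / Real.sinh (lik / 2))
      / (Real.sinh (ljk' / 2) / Real.sinh (ljk / 2))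
      ≥ ε ^ 3 / (8192 * lij) ∧ ε ^ 3 / (8192 * lij) ≥ 1 := by
  obtain ⟨hε₀, hε₁⟩ := hε
  have hsin : ε / 2 ≤ sin ε := half_le_sin hε₀.le (by linarith [pi_gt_three])
  have hjk_lower : lik * ε / 4 ≤ sinh (ljk / 2) := by
    nlinarith [half_le_sinh_half hjk.le]
  have hik'_lower : ε / 32 ≤ sinh (lik' / 2) := by linarith [half_le_sinh_half hik'.le]
  have hjk'_upper : sinh (ljk' / 2) ≤ 32 / ε * lij' := (sinh_half_le_self hjk'.le h8).trans h7
  have hsinh_pos {x : ℝ} (hx : 0 < x) : 0 < sinh (x / 2) := sinh_pos_iff.mpr (by positivity)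
  refine ⟨?_, by rw [ge_iff_le, le_div_iff₀ (by positivity)]; linarith⟩
  rw [div_mul_div_comm, div_div_div_eq, ge_iff_le]
  have hsij := hsinh_pos hij
  have hsik := hsinh_pos hik
  have hsjk' := hsinh_pos hjk'
  calc ε ^ 3 / (8192 * lij)
      = lij' / 2 * (ε / 32) * (lik * ε / 4) / (lij * lik * (32 / ε * lij')) := by
        field_simp; ring
    _ ≤ _ := by
        gcongr
        · exact half_le_sinh_half hij'.le
        · exact sinh_half_le_self hij.le (by linarith)
        · exact sinh_half_le_self hik.le (by linarith)

theorem contradiction_estimate (ε : ℝ) (hε : ε ∈ Set.Ioc (0:ℝ) 1)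
    (lij ljk lik lij' ljk' lik' : ℝ)
    (hij : 0 < lij) (hjk : 0 < ljk) (hik : 0 < lik)
    (hij' : 0 < lij') (hjk' : 0 < ljk') (hik' : 0 < lik')
    (h1 : lij ≤ ε ^ 3 / 8192) (h2 : lik ≤ ε ^ 3 / 8192) (h3 : ε ^ 3 / 8192 ≤ 1)
    (h4 : ljk ≥ lik * Real.sin ε)
    (h5 : lik' ≥ ε / 16) (h6 : lik' ≤ 2)
    (h7 : ljk' ≤ (32 / ε) * lij') (h8 : ljk' ≤ 2) :
    (Real.sinh (lij' / 2) / Real.sinh (lij / 2))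
      * (Real.sinh (lik' / 2) / Real.sinh (lik / 2))
      / (Real.sinh (ljk' / 2) / Real.sinh (ljk / 2))
      ≥ ε ^ 3 / (8192 * lij) ∧ ε ^ 3 / (8192 * lij) ≥ 1 :=
  contradiction_estimate_general ε hε lij ljk lik lij' ljk' lik' hij hjk hik hij' hjk' hik' h1 h2 h3
    h4 h5 h7 h8
end
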